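/- arXiv:2507.13114 — 4 statements merged into one kernel-verified Lean document; each statement's English description precedes it below -/
import Mathlib

section
/- Let P be a preorder with binary meets and Γ a packeting on P such that each Γ(c) is upward closed, nonempty, and closed under binary meets. Let U and V be Γ-ideals. If every J^Γ-prime filter that meets U also meets V, then U ⊆ V. (In other words, the frame of Γ-ideals has enough points.) -/
/-- A packeting on a preorder `P`. -/
def IsPacketing {P : Type*} [Preorder P] (Γ : P → Set P) : Prop :=
  (∀ c, c ∈ Γ c) ∧ (∀ c d, d ∈ Γ c → Γ d ⊆ Γ c)

/-- A `Γ`-ideal: downward closed, and if some `a ∈ Γ c` lies in `I` then `c ∈ I`. -/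
def IsGammaIdeal {P : Type*} [Preorder P] (Γ : P → Set P) (I : Set P) : Prop :=
  (∀ a b : P, b ≤ a → a ∈ I → b ∈ I) ∧
  (∀ c : P, (∃ a ∈ Γ c, a ∈ I) → c ∈ I)

/-- A `J^Γ`-prime filter: nonempty, upward closed, downward directed, and for every
`c ∈ F` and every `a ∈ Γ c`, some `d ≤ a` lies in `F`. -/
def IsGammaPrimeFilter {P : Type*} [Preorder P] (Γ : P → Set P) (F : Set P) : Prop :=
  F.Nonempty ∧
  (∀ b ∈ F, ∀ b', b ≤ b' → b' ∈ F) ∧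
  (∀ x ∈ F, ∀ y ∈ F, ∃ z ∈ F, z ≤ x ∧ z ≤ y) ∧
  (∀ c ∈ F, ∀ a ∈ Γ c, ∃ d, d ≤ a ∧ d ∈ F)

/-- The frame of `Γ`-ideals has enough points: if every `J^Γ`-prime filter
meeting the `Γ`-ideal `U` also meets the `Γ`-ideal `V`, then `U ⊆ V`. -/
theorem stmt_5 {P : Type*} [SemilatticeInf P] (Γ : P → Set P) (hΓ : IsPacketing Γ)
    (hup : ∀ c, ∀ x ∈ Γ c, ∀ y, x ≤ y → y ∈ Γ c)
    (hne : ∀ c, (Γ c).Nonempty)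
    (hinf : ∀ c, ∀ x ∈ Γ c, ∀ y ∈ Γ c, x ⊓ y ∈ Γ c)
    (U V : Set P) (hU : IsGammaIdeal Γ U) (hV : IsGammaIdeal Γ V)
    (h : ∀ F : Set P, IsGammaPrimeFilter Γ F → (F ∩ U).Nonempty → (F ∩ V).Nonempty) :
    U ⊆ V := by
  intro u hu
  have hprime : IsGammaPrimeFilter Γ (Γ u) := by
    refine ⟨⟨u, hΓ.1 u⟩, ?_, ?_, ?_⟩
    · exact fun b hb b' hbb' => hup u b hb b' hbb'
    · exact fun x hx y hy => ⟨x ⊓ y, hinf u x hx y hy, inf_le_left, inf_le_right⟩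
    · exact fun c hc a ha => ⟨a, le_refl a, hΓ.2 u c hc ha⟩
  obtain ⟨v, hvF, hvV⟩ := h (Γ u) hprime ⟨u, hΓ.1 u, hu⟩
  exact hV.2 u ⟨v, hvF, hvV⟩
end

section
/- Let L be a complete lattice in which arbitrary joins of a certain distinguished family 'ideals' are unions (formally: L is a frame of subsets of a set, closed under arbitrary unions and binary intersections). Suppose L satisfies the retro-packeted condition: for every compact U ∈ L and every V ∈ L with V ⊆ U, writing ⟨V^c⟩ for the smallest element of L containing U \ V, one has: if ⟨V^c⟩ ∪ W = U for some W ∈ L with W ⊆ V, then W = V. Then the intersection of any two compact elements of L is compact. -/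
/-- The smallest element of the family `L` containing `S`. -/
def genL {X : Type*} (L : Set (Set X)) (S : Set X) : Set X :=
  ⋂₀ {U | U ∈ L ∧ S ⊆ U}

/-- `U` is a compact (finite) element of the set-frame `L`: it belongs to `L`, and any
way of writing it as a union of members of `L` admits a finite subfamily with the same
union. -/
def IsCompactElt {X : Type*} (L : Set (Set X)) (U : Set X) : Prop :=
  U ∈ L ∧ ∀ 𝒰 : Set (Set X), 𝒰 ⊆ L → U = ⋃₀ 𝒰 →
    ∃ t : Finset (Set X), ↑t ⊆ 𝒰 ∧ U = ⋃₀ (t : Set (Set X))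

/-- In a frame of subsets (closed under arbitrary unions, binary
intersections, containing `∅` and the top, and admitting smallest members containing any
set) satisfying the retro-packeted condition, the intersection of two compact elements is
compact. -/
theorem stmt_7 {X : Type*} (L : Set (Set X))
    (hempty : (∅ : Set X) ∈ L) (htop : (Set.univ : Set X) ∈ L)
    (hunion : ∀ 𝒰 : Set (Set X), 𝒰 ⊆ L → ⋃₀ 𝒰 ∈ L)
    (hinter : ∀ U ∈ L, ∀ V ∈ L, U ∩ V ∈ L)
    (hgen : ∀ S : Set X, genL L S ∈ L)
    (hretro : ∀ U : Set X, IsCompactElt L U → ∀ V ∈ L, V ⊆ U →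
      ∀ W ∈ L, W ⊆ V → genL L (U \ V) ∪ W = U → W = V)
    (U U' : Set X) (hU : IsCompactElt L U) (hU' : IsCompactElt L U') :
    IsCompactElt L (U ∩ U') := by

  classical
  have hVL : U ∩ U' ∈ L := hinter U hU.1 U' hU'.1
  refine ⟨hVL, ?_⟩
  intro 𝒰 h𝒰L hcov
  set V := U ∩ U' with hV
  set G := genL L (U \ V) with hG
  have hGL : G ∈ L := hgen _
  have hGsub : G ⊆ U := Set.sInter_subset_of_mem ⟨hU.1, Set.diff_subset⟩
  have hdiffG : U \ V ⊆ G := fun x hx => by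
    intro W hW; exact hW.2 hx
  have hVU : V ⊆ U := Set.inter_subset_left
  -- cover U by G together with 𝒰
  have hcover : U = ⋃₀ (insert G 𝒰) := by
    apply Set.Subset.antisymm
    · intro x hx
      by_cases hxV : x ∈ V
      · rw [hcov] at hxV
        obtain ⟨W, hW, hxW⟩ := hxV
        exact ⟨W, Set.mem_insert_of_mem _ hW, hxW⟩
      · exact ⟨G, Set.mem_insert _ _, hdiffG ⟨hx, hxV⟩⟩
    · intro x hx
      obtain ⟨W, hW, hxW⟩ := hx
      rcases hW with rfl | hW
      · exact hGsub hxW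
      · exact hVU (hcov ▸ ⟨W, hW, hxW⟩)
  obtain ⟨t, htsub, htU⟩ := hU.2 (insert G 𝒰)
    (by
      intro W hW
      rcases hW with rfl | hW
      · exact hGL
      · exact h𝒰L hW) hcover
  refine ⟨t.erase G, ?_, ?_⟩
  · intro W hW
    simp only [Finset.coe_erase, Set.mem_diff, Set.mem_singleton_iff] at hW
    rcases htsub hW.1 with rfl | h
    · exact absurd rfl hW.2
    · exact h
  · have hWL : ⋃₀ ((t.erase G : Finset (Set X)) : Set (Set X)) ∈ L := by
      apply hunion
      intro W hW
      simp only [Finset.coe_erase, Set.mem_diff, Set.mem_singleton_iff] at hW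
      rcases htsub hW.1 with rfl | h
      · exact absurd rfl hW.2
      · exact h𝒰L h
    have hWV : ⋃₀ ((t.erase G : Finset (Set X)) : Set (Set X)) ⊆ V := by
      intro x hx
      obtain ⟨W, hW, hxW⟩ := hx
      simp only [Finset.coe_erase, Set.mem_diff, Set.mem_singleton_iff] at hW
      rcases htsub hW.1 with rfl | h
      · exact absurd rfl hW.2
      · exact hcov ▸ ⟨W, h, hxW⟩
    have hGW : G ∪ ⋃₀ ((t.erase G : Finset (Set X)) : Set (Set X)) = U := by
      apply Set.Subset.antisymm
      · exact Set.union_subset hGsub (hWV.trans hVU)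
      · intro x hx
        rw [htU] at hx
        obtain ⟨W, hW, hxW⟩ := hx
        by_cases hWG : W = G
        · exact Or.inl (hWG ▸ hxW)
        · exact Or.inr ⟨W, by simp [Finset.mem_coe, Finset.mem_erase, hWG, hW], hxW⟩
    exact (hretro U hU V hVL hVU _ hWL hWV hGW).symm
end

section
/- Let P be a preorder with a covering system, let Id denote the set of J-ideals of P (closed under arbitrary intersections, with joins ⋁ given by the smallest ideal containing the union), and let 𝔉 denote the set of J-prime filters on P. For a J-ideal I set U_I = {F ∈ 𝔉 : F ∩ I ≠ ∅}. Then: (a) U_{I ∩ I'} = U_I ∩ U_{I'} for all J-ideals I, I'; and (b) U_{⋁_α I_α} = ⋃_α U_{I_α} for every family of J-ideals {I_α}. Consequently {U_I : I ∈ Id} is a topology on 𝔉. -/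
/-- A `J`-ideal: downward closed, and closed under the covering condition. -/
def IsJIdeal {P : Type*} [Preorder P] (J : P → Set (Set P)) (I : Set P) : Prop :=
  (∀ a b : P, b ≤ a → a ∈ I → b ∈ I) ∧
  (∀ p : P, ∀ S ∈ J p, S ⊆ I → p ∈ I)

/-- A `J`-prime filter: nonempty, upward closed, downward directed, and meeting every
covering family of each of its elements. -/
def IsJPrimeFilter {P : Type*} [Preorder P] (J : P → Set (Set P)) (F : Set P) : Prop :=
  F.Nonempty ∧
  (∀ b ∈ F, ∀ b', b ≤ b' → b' ∈ F) ∧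
  (∀ x ∈ F, ∀ y ∈ F, ∃ z ∈ F, z ≤ x ∧ z ≤ y) ∧
  (∀ p ∈ F, ∀ S ∈ J p, ∃ q ∈ S, q ∈ F)

/-- The basic "open set" of prime filters meeting `I`. -/
def Uset {P : Type*} [Preorder P] (J : P → Set (Set P)) (I : Set P) : Set (Set P) :=
  {F | IsJPrimeFilter J F ∧ (F ∩ I).Nonempty}

/-- The join of a family of `J`-ideals: the smallest `J`-ideal containing their union. -/
def Jjoin {P : Type*} [Preorder P] (J : P → Set (Set P)) {ι : Sort*}
    (I : ι → Set P) : Set P :=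
  ⋂₀ {K | IsJIdeal J K ∧ (⋃ i, I i) ⊆ K}

/-- For `J`-ideals, (a) `U_{I ∩ I'} = U_I ∩ U_{I'}`, and
(b) `U_{⋁ I_α} = ⋃ U_{I_α}`; hence the sets `U_I` form a topology on the prime filters. -/
theorem stmt_9 {P : Type*} [Preorder P] (J : P → Set (Set P))
    (hJ : ∀ p : P, ∀ S ∈ J p, ∀ q ∈ S, q ≤ p) :
    (∀ I I' : Set P, IsJIdeal J I → IsJIdeal J I' →
        Uset J (I ∩ I') = Uset J I ∩ Uset J I') ∧
    (∀ (ι : Type*) (I : ι → Set P), (∀ i, IsJIdeal J (I i)) →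
        Uset J (Jjoin J I) = ⋃ i, Uset J (I i)) := by
  constructor
  · intro I I' hI hI'
    ext F
    simp only [Uset, Set.mem_setOf_eq, Set.mem_inter_iff]
    constructor
    · rintro ⟨hF, x, hxF, hxI, hxI'⟩
      exact ⟨⟨hF, x, hxF, hxI⟩, hF, x, hxF, hxI'⟩
    · rintro ⟨⟨hF, x, hxF, hxI⟩, _, y, hyF, hyI'⟩
      obtain ⟨z, hzF, hzx, hzy⟩ := hF.2.2.1 x hxF y hyF
      exact ⟨hF, z, hzF, hI.1 x z hzx hxI, hI'.1 y z hzy hyI'⟩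
  · intro ι I hI
    ext F
    simp only [Uset, Set.mem_setOf_eq, Set.mem_iUnion]
    constructor
    · rintro ⟨hF, x, hxF, hxJ⟩
      by_contra hC
      push_neg at hC
      have hFc : IsJIdeal J Fᶜ ∧ (⋃ i, I i) ⊆ Fᶜ := by
        refine ⟨⟨?_, ?_⟩, ?_⟩
        · intro a b hba ha hb
          exact ha (hF.2.1 b hb a hba)
        · intro p S hS hSc hp
          obtain ⟨q, hqS, hqF⟩ := hF.2.2.2 p hp S hS
          exact hSc hqS hqF
        · rintro p hp hpF
          obtain ⟨i, hpi⟩ := Set.mem_iUnion.mp hp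
          exact Set.nonempty_iff_ne_empty.mp (⟨p, hpF, hpi⟩ : (F ∩ I i).Nonempty) (hC i hF)
      exact hxJ Fᶜ hFc hxF
    · rintro ⟨i, hF, x, hxF, hxI⟩
      refine ⟨hF, x, hxF, fun K hK => hK.2 (Set.mem_iUnion.mpr ⟨i, hxI⟩)⟩
end

section
/- Let C be a braided (or symmetric) monoidal category, A a monoidal category, and q : A ⥤ C a fully faithful functor admitting a right adjoint q^*, together with a natural isomorphism (projection formula) q(a ⊗ q^*(c)) ≅ q(a) ⊗ c, natural in a ∈ A and c ∈ C, compatible with unitors in the evident way. Then the colocalization Q := q ∘ q^* : C ⥤ C is smashing: there is a natural isomorphism Q(c) ≅ Q(1_C) ⊗ c for all c ∈ C. -/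
open CategoryTheory MonoidalCategory

/-- Let `C` be braided monoidal, `A` monoidal, `q : A ⥤ C` fully faithful
with right adjoint `q^*`, together with a projection-formula natural isomorphism
`q(a ⊗ q^* c) ≅ q(a) ⊗ c` compatible with unitors. Then the colocalization
`Q = q ∘ q^*` is smashing: `Q(c) ≅ Q(1) ⊗ c` naturally in `c`. -/
theorem stmt_15 {A C : Type*} [Category A] [Category C]
    [MonoidalCategory A] [MonoidalCategory C] [BraidedCategory C]
    (q : A ⥤ C) [q.Full] [q.Faithful] (qstar : C ⥤ A) (adj : q ⊣ qstar)
    (π : ∀ (a : A) (c : C), q.obj (a ⊗ qstar.obj c) ≅ q.obj a ⊗ c)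
    (hπ : ∀ {a a' : A} (f : a ⟶ a') {c c' : C} (g : c ⟶ c'),
        q.map (f ⊗ₘ qstar.map g) ≫ (π a' c').hom = (π a c).hom ≫ (q.map f ⊗ₘ g))
    (u : ∀ a : A, a ⊗ qstar.obj (𝟙_ C) ≅ a)
    (hu : ∀ a : A, q.map (u a).hom = (π a (𝟙_ C)).hom ≫ (ρ_ (q.obj a)).hom) :
    Nonempty ((qstar ⋙ q) ≅ tensorLeft (q.obj (qstar.obj (𝟙_ C)))) := by
  classical
  -- naturality of u
  have u_nat : ∀ {a a' : A} (f : a ⟶ a'),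
      (f ▷ qstar.obj (𝟙_ C)) ≫ (u a').hom = (u a).hom ≫ f := by
    intro a a' f
    apply q.map_injective
    have h1 : (f ▷ qstar.obj (𝟙_ C)) = f ⊗ₘ qstar.map (𝟙 (𝟙_ C)) := by simp
    rw [q.map_comp, q.map_comp, hu, hu, h1, ← Category.assoc, hπ]
    simp
  -- components
  let e : ∀ c : C, q.obj (qstar.obj c) ≅ q.obj (qstar.obj (𝟙_ C)) ⊗ c := fun c =>
    q.mapIso (u (qstar.obj c)).symm
      ≪≫ q.mapIso (whiskerLeftIso (qstar.obj c) (asIso (adj.unit.app (qstar.obj (𝟙_ C)))))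
      ≪≫ π (qstar.obj c) (q.obj (qstar.obj (𝟙_ C)))
      ≪≫ β_ (q.obj (qstar.obj c)) (q.obj (qstar.obj (𝟙_ C)))
      ≪≫ (π (qstar.obj (𝟙_ C)) (q.obj (qstar.obj c))).symm
      ≪≫ q.mapIso (whiskerLeftIso (qstar.obj (𝟙_ C)) (asIso (adj.unit.app (qstar.obj c))).symm)
      ≪≫ π (qstar.obj (𝟙_ C)) c
  refine ⟨NatIso.ofComponents e ?_⟩
  intro c c' g
  dsimp [e]
  simp only [MonoidalCategory.whiskerLeftIso_hom, Iso.symm_hom, asIso_hom, asIso_inv]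
  have h1 : q.map (qstar.map g) ≫ q.map (u (qstar.obj c')).inv
      = q.map (u (qstar.obj c)).inv ≫ q.map (qstar.map g ▷ qstar.obj (𝟙_ C)) := by
    rw [← q.map_comp, ← q.map_comp]
    congr 1
    rw [Iso.comp_inv_eq, Category.assoc, u_nat, Iso.inv_hom_id_assoc]
  have h2 : q.map (qstar.map g ▷ qstar.obj (𝟙_ C)) ≫
        q.map (qstar.obj c' ◁ adj.unit.app (qstar.obj (𝟙_ C)))
      = q.map (qstar.obj c ◁ adj.unit.app (qstar.obj (𝟙_ C))) ≫
        q.map (qstar.map g ▷ qstar.obj (q.obj (qstar.obj (𝟙_ C)))) := by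
    rw [← q.map_comp, ← q.map_comp, ← whisker_exchange]
    rfl
  have h3 : q.map (qstar.map g ▷ qstar.obj (q.obj (qstar.obj (𝟙_ C)))) ≫
        (π (qstar.obj c') (q.obj (qstar.obj (𝟙_ C)))).hom
      = (π (qstar.obj c) (q.obj (qstar.obj (𝟙_ C)))).hom ≫
        (q.map (qstar.map g) ▷ q.obj (qstar.obj (𝟙_ C))) := by
    simpa using hπ (qstar.map g) (𝟙 (q.obj (qstar.obj (𝟙_ C))))
  have h4 : (q.map (qstar.map g) ▷ q.obj (qstar.obj (𝟙_ C))) ≫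
        (β_ (q.obj (qstar.obj c')) (q.obj (qstar.obj (𝟙_ C)))).hom
      = (β_ (q.obj (qstar.obj c)) (q.obj (qstar.obj (𝟙_ C)))).hom ≫
        (q.obj (qstar.obj (𝟙_ C)) ◁ q.map (qstar.map g)) :=
    BraidedCategory.braiding_naturality_left _ _
  have h5' : q.map (qstar.obj (𝟙_ C) ◁ qstar.map (q.map (qstar.map g))) ≫
        (π (qstar.obj (𝟙_ C)) (q.obj (qstar.obj c'))).hom
      = (π (qstar.obj (𝟙_ C)) (q.obj (qstar.obj c))).hom ≫
        (q.obj (qstar.obj (𝟙_ C)) ◁ q.map (qstar.map g)) := by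
    simpa using hπ (𝟙 (qstar.obj (𝟙_ C))) (q.map (qstar.map g))
  have h5 : (q.obj (qstar.obj (𝟙_ C)) ◁ q.map (qstar.map g)) ≫
        (π (qstar.obj (𝟙_ C)) (q.obj (qstar.obj c'))).inv
      = (π (qstar.obj (𝟙_ C)) (q.obj (qstar.obj c))).inv ≫
        q.map (qstar.obj (𝟙_ C) ◁ qstar.map (q.map (qstar.map g))) := by
    rw [← cancel_mono (π (qstar.obj (𝟙_ C)) (q.obj (qstar.obj c'))).hom]
    simp only [Category.assoc, Iso.inv_hom_id, Category.comp_id, h5',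
      Iso.inv_hom_id_assoc]
  have h6 : q.map (qstar.obj (𝟙_ C) ◁ qstar.map (q.map (qstar.map g))) ≫
        q.map (qstar.obj (𝟙_ C) ◁ inv (adj.unit.app (qstar.obj c')))
      = q.map (qstar.obj (𝟙_ C) ◁ inv (adj.unit.app (qstar.obj c))) ≫
        q.map (qstar.obj (𝟙_ C) ◁ qstar.map g) := by
    rw [← q.map_comp, ← q.map_comp, ← MonoidalCategory.whiskerLeft_comp,
      ← MonoidalCategory.whiskerLeft_comp]
    congr 2
    have hn := adj.unit.naturality (qstar.map g)
    simp only [Functor.id_map, Functor.comp_map] at hn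
    rw [IsIso.comp_inv_eq, Category.assoc]
    rw [hn, IsIso.inv_hom_id_assoc]
  have h7 : q.map (qstar.obj (𝟙_ C) ◁ qstar.map g) ≫ (π (qstar.obj (𝟙_ C)) c').hom
      = (π (qstar.obj (𝟙_ C)) c).hom ≫ (q.obj (qstar.obj (𝟙_ C)) ◁ g) := by
    simpa using hπ (𝟙 (qstar.obj (𝟙_ C))) g
  slice_lhs 1 2 => rw [h1]
  slice_lhs 2 3 => rw [h2]
  slice_lhs 3 4 => rw [h3]
  slice_lhs 4 5 => rw [h4]
  slice_lhs 5 6 => rw [h5]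
  slice_lhs 6 7 => rw [h6]
  slice_lhs 7 8 => rw [h7]
  simp only [Category.assoc]
end
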